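/- Let 0 < ε ≤ 1, m = ⌈144·ε^{−2}⌉, and let Ŵ¹, …, Ŵ^m be independent random variables each distributed as W = 2^n·Π_{i=1}^{ℓ} W_i. Then the average Ẑ = (1/m)·Σ_{j=1}^m Ŵ^j satisfies Pr[exp(−ε/2)·Z(θ_ℓ) ≤ Ẑ ≤ exp(ε/2)·Z(θ_ℓ)] ≥ 7/8. -/

import Mathlib

open Finset

/-- A clause over variable set `V`. -/
structure Clause (V : Type) where
  vars : Finset V
  sign : V → Bool

/-- A clause is satisfied by an assignment iff some variable of the clause is
assigned the polarity of its literal. -/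
def Clause.sat {V : Type} (c : Clause V) (X : V → Bool) : Prop :=
  ∃ v ∈ c.vars, X v = c.sign v

instance {V : Type} (c : Clause V) (X : V → Bool) : Decidable (c.sat X) :=
  inferInstanceAs (Decidable (∃ v ∈ c.vars, X v = c.sign v))

/-- `|F(X)|`: the number of clauses not satisfied by the assignment `X`. -/
def numUnsat {V ι : Type} [Fintype ι] (cl : ι → Clause V) (X : V → Bool) : ℕ :=
  (Finset.univ.filter fun i => ¬ (cl i).sat X).card

/-- The weight `w_θ(X) = exp(−θ·|F(X)|)`. -/
noncomputable def wt {V ι : Type} [Fintype ι] (cl : ι → Clause V) (θ : ℝ)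
    (X : V → Bool) : ℝ :=
  Real.exp (-θ * numUnsat cl X)

/-- The partition function `Z(θ) = Σ_{X ∈ {0,1}^V} w_θ(X)`. -/
noncomputable def partZ {V ι : Type} [Fintype V] [DecidableEq V] [Fintype ι]
    (cl : ι → Clause V) (θ : ℝ) : ℝ :=
  ∑ X : V → Bool, wt cl θ X

/-- The value of the random variable `W = 2^n·Π_{i=1}^ℓ W_i` on a joint sample
`x = (X_1, …, X_ℓ)`, where the `i`-th factor is `W_i = w_{θ_i}(X_i)/w_{θ_{i−1}}(X_i)`
(indices shifted so that `x i ∼ μ_{θ_i}` represents the sample for `W_{i+1}`). -/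
noncomputable def What {V ι : Type} [Fintype V] [DecidableEq V] [Fintype ι]
    (cl : ι → Clause V) (θ : ℕ → ℝ) (ℓ : ℕ) (x : Fin ℓ → (V → Bool)) : ℝ :=
  2 ^ Fintype.card V * ∏ i : Fin ℓ, wt cl (θ ((i : ℕ) + 1)) (x i) / wt cl (θ (i : ℕ)) (x i)

/-- The probability of a joint sample `ω` of `m` independent copies of `(X_1, …, X_ℓ)`,
where all coordinates are independent and `ω j i ∼ μ_{θ_i}`. -/
noncomputable def probOmega {V ι : Type} [Fintype V] [DecidableEq V] [Fintype ι]
    (cl : ι → Clause V) (θ : ℕ → ℝ) (ℓ m : ℕ)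
    (ω : Fin m → Fin ℓ → (V → Bool)) : ℝ :=
  ∏ j : Fin m, ∏ i : Fin ℓ, wt cl (θ (i : ℕ)) (ω j i) / partZ cl (θ (i : ℕ))

/-!
Telescoping gives `E[W] = 2^n Z(θ_ℓ) / Z(θ_0) = Z(θ_ℓ)`. Since the exponent of a weight is linear in
the temperature and the schedule is arithmetic, `w_{θ_i} (w_{θ_{i+1}} / w_{θ_i})² = w_{θ_{i+2}}`, so
`E[W²] = 2^n Z(θ_{ℓ+1}) Z(θ_ℓ) / Z(θ_1)`. Every assignment violates at most `|C| ≤ nd` clauses, so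
`Z(θ_1) ≥ 2^n / e`, and `Z` is antitone; hence `E[W²] ≤ e Z(θ_ℓ)²` and `Var W ≤ 2 Z(θ_ℓ)²`.
The target window contains `[(1 - ε/3) Z(θ_ℓ), (1 + ε/3) Z(θ_ℓ)]`, so by Chebyshev the average of
`m ≥ 144 / ε²` copies misses it with probability at most `18 / (m ε²) ≤ 1/8`.
-/

open Real

theorem prod_range_div_of_ne_zero {K : Type*} [Field K] (g : ℕ → K) (hg : ∀ i, g i ≠ 0)
    (n : ℕ) : ∏ i ∈ range n, g (i + 1) / g i = g n / g 0 := by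
  induction n with
  | zero => simp [hg 0]
  | succ n ih => rw [prod_range_succ, ih, mul_comm, div_mul_div_cancel₀ (hg n)]

theorem prod_range_add_two_div {K : Type*} [Field K] (g : ℕ → K) (hg : ∀ i, g i ≠ 0)
    (n : ℕ) : ∏ i ∈ range n, g (i + 2) / g i = g (n + 1) / g 1 * (g n / g 0) := by
  have hsplit : ∀ i, g (i + 2) / g i = g (i + 1 + 1) / g (i + 1) * (g (i + 1) / g i) :=
    fun i => (div_mul_div_cancel₀ (hg (i + 1))).symm
  rw [prod_congr rfl fun i _ => hsplit i, prod_mul_distrib,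
    prod_range_div_of_ne_zero (fun i => g (i + 1)) (fun i => hg (i + 1)),
    prod_range_div_of_ne_zero g hg]

theorem mem_Icc_exp_half_mul_of_abs_sub_lt {ε Z A : ℝ} (hε0 : 0 ≤ ε) (hε1 : ε ≤ 1)
    (hZ : 0 ≤ Z) (hA : |A - Z| < ε / 3 * Z) :
    A ∈ Set.Icc (exp (-(ε / 2)) * Z) (exp (ε / 2) * Z) := by
  have hpos : 0 < 1 + ε / 2 := by linarith
  have hexp_neg : exp (-(ε / 2)) ≤ 1 - ε / 3 :=
    calc exp (-(ε / 2)) = (exp (ε / 2))⁻¹ := exp_neg _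
      _ ≤ (1 + ε / 2)⁻¹ := inv_anti₀ hpos (by linarith [add_one_le_exp (ε / 2)])
      _ ≤ 1 - ε / 3 := by
        rw [inv_le_iff_one_le_mul₀ hpos]
        nlinarith
  obtain ⟨hlow, hup⟩ := abs_sub_lt_iff.1 hA
  constructor
  · nlinarith
  · nlinarith [add_one_le_exp (ε / 2)]

section FiniteProbability

variable {α : Type*} [Fintype α]

theorem one_sub_div_sq_le_sum_filter {p f : α → ℝ} (hp : ∀ x, 0 ≤ p x) (hp1 : ∑ x, p x = 1)
    {t : ℝ} (ht : 0 < t) (S : α → Prop) [DecidablePred S] (hS : ∀ x, |f x| < t → S x) :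
    1 - (∑ x, p x * f x ^ 2) / t ^ 2 ≤ ∑ x ∈ univ.filter S, p x := by
  have hbad : ∑ x ∈ univ.filter (fun x => ¬ S x), p x ≤ ∑ x, p x * f x ^ 2 / t ^ 2 :=
    calc ∑ x ∈ univ.filter (fun x => ¬ S x), p x
        ≤ ∑ x ∈ univ.filter (fun x => ¬ S x), p x * f x ^ 2 / t ^ 2 := by
          refine sum_le_sum fun x hx => ?_
          have htf : t ≤ |f x| := not_lt.1 fun h => (mem_filter.1 hx).2 (hS x h)
          have hsq : t ^ 2 ≤ f x ^ 2 := sq_le_sq.2 (by rwa [abs_of_pos ht])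
          rw [mul_div_assoc]
          exact le_mul_of_one_le_right (hp x) ((one_le_div (by positivity)).2 hsq)
      _ ≤ ∑ x, p x * f x ^ 2 / t ^ 2 :=
          sum_le_sum_of_subset_of_nonneg (filter_subset _ _) fun x _ _ =>
            div_nonneg (mul_nonneg (hp x) (sq_nonneg _)) (sq_nonneg _)
  have hsplit := sum_filter_add_sum_filter_not univ S p
  rw [sum_div]
  linarith

theorem sum_mul_sub_sq {p W : α → ℝ} (hp1 : ∑ x, p x = 1) {μ : ℝ}
    (hμ : ∑ x, p x * W x = μ) :
    ∑ x, p x * (W x - μ) ^ 2 = ∑ x, p x * W x ^ 2 - μ ^ 2 := by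
  have hexpand : ∀ x, p x * (W x - μ) ^ 2 = p x * W x ^ 2 - 2 * μ * (p x * W x) + μ ^ 2 * p x :=
    fun x => by ring
  simp_rw [hexpand, sum_add_distrib, sum_sub_distrib, ← mul_sum, hμ, hp1]
  ring

variable {ι : Type*} [Fintype ι] [DecidableEq ι]

theorem sum_pi_prod_mul_prod (Q : α → ℝ) (F : ι → α → ℝ) :
    ∑ ω : ι → α, (∏ i, Q (ω i)) * ∏ i, F i (ω i) = ∏ i, ∑ x, Q x * F i x := by
  simp_rw [← prod_mul_distrib]
  exact (Fintype.prod_sum fun i x => Q x * F i x).symm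

variable {Q : α → ℝ} (hQ : ∑ x, Q x = 1)
include hQ

theorem sum_pi_prod_eq_one : ∑ ω : ι → α, ∏ i, Q (ω i) = 1 := by
  simpa [hQ] using sum_pi_prod_mul_prod (ι := ι) Q fun _ _ => 1

theorem sum_pi_prod_mul_apply (f : α → ℝ) (j : ι) :
    ∑ ω : ι → α, (∏ i, Q (ω i)) * f (ω j) = ∑ x, Q x * f x := by
  have hfactor : ∀ i, ∑ x, Q x * (if i = j then f x else 1)
      = if i = j then ∑ x, Q x * f x else 1 := by
    intro i; split_ifs <;> simp [hQ]
  simpa only [Fintype.prod_ite_eq', hfactor] using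
    sum_pi_prod_mul_prod Q fun i x => if i = j then f x else 1

theorem sum_pi_prod_mul_apply_mul_apply (f g : α → ℝ) {j k : ι} (hjk : j ≠ k) :
    ∑ ω : ι → α, (∏ i, Q (ω i)) * (f (ω j) * g (ω k))
      = (∑ x, Q x * f x) * ∑ x, Q x * g x := by
  have hfactor : ∀ i, ∑ x, Q x * ((if i = j then f x else 1) * (if i = k then g x else 1))
      = (if i = j then ∑ x, Q x * f x else 1) * (if i = k then ∑ x, Q x * g x else 1) := by
    intro i
    by_cases hij : i = j
    · subst hij; simp [hjk]
    · by_cases hik : i = k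
      · subst hik; simp [hij]
      · simp [hij, hik, hQ]
  simpa only [prod_mul_distrib, Fintype.prod_ite_eq', hfactor] using
    sum_pi_prod_mul_prod Q fun i x => (if i = j then f x else 1) * (if i = k then g x else 1)

theorem sum_pi_prod_mul_sum_sq {g : α → ℝ} (hg : ∑ x, Q x * g x = 0) :
    ∑ ω : ι → α, (∏ i, Q (ω i)) * (∑ i, g (ω i)) ^ 2
      = Fintype.card ι * ∑ x, Q x * g x ^ 2 := by
  have hpair : ∀ j k : ι, ∑ ω : ι → α, (∏ i, Q (ω i)) * (g (ω j) * g (ω k))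
      = if j = k then ∑ x, Q x * g x ^ 2 else 0 := by
    intro j k
    split_ifs with hjk
    · subst hjk; simpa only [sq] using sum_pi_prod_mul_apply hQ (fun x => g x * g x) j
    · rw [sum_pi_prod_mul_apply_mul_apply hQ g g hjk, hg, zero_mul]
  calc ∑ ω : ι → α, (∏ i, Q (ω i)) * (∑ i, g (ω i)) ^ 2
      = ∑ j, ∑ k, ∑ ω : ι → α, (∏ i, Q (ω i)) * (g (ω j) * g (ω k)) := by
        simp_rw [sq, sum_mul_sum, mul_sum]
        rw [sum_comm]
        exact sum_congr rfl fun j _ => sum_comm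
    _ = Fintype.card ι * ∑ x, Q x * g x ^ 2 := by simp [hpair]

omit [DecidableEq ι] in
theorem sum_pi_prod_mul_sq_mean_sub {m : ℕ} (hm : 0 < m) {W : α → ℝ} {μ : ℝ}
    (hμ : ∑ x, Q x * W x = μ) :
    ∑ ω : Fin m → α, (∏ j, Q (ω j)) * ((1 / m : ℝ) * ∑ j, W (ω j) - μ) ^ 2
      = (∑ x, Q x * (W x - μ) ^ 2) / m := by
  have hm0 : (m : ℝ) ≠ 0 := Nat.cast_ne_zero.2 hm.ne'
  have hcentered : ∑ x, Q x * (W x - μ) = 0 := by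
    simp_rw [mul_sub, sum_sub_distrib, ← sum_mul, hμ, hQ, one_mul, sub_self]
  have hmean : ∀ ω : Fin m → α,
      (1 / m : ℝ) * ∑ j, W (ω j) - μ = (1 / m : ℝ) * ∑ j, (W (ω j) - μ) := by
    intro ω
    rw [sum_sub_distrib, sum_const, card_univ, Fintype.card_fin, nsmul_eq_mul]
    field_simp
  simp_rw [hmean, mul_pow, mul_left_comm _ ((1 / m : ℝ) ^ 2), ← mul_sum,
    sum_pi_prod_mul_sum_sq hQ hcentered, Fintype.card_fin]
  field_simp

omit [DecidableEq ι] in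
theorem one_sub_div_le_sum_filter_of_abs_mean_sub_lt (hQ0 : ∀ x, 0 ≤ Q x) {m : ℕ} (hm : 0 < m)
    {W : α → ℝ} {μ : ℝ} (hμ : ∑ x, Q x * W x = μ) {t : ℝ} (ht : 0 < t)
    (S : (Fin m → α) → Prop) [DecidablePred S]
    (hS : ∀ ω, |(1 / m : ℝ) * ∑ j, W (ω j) - μ| < t → S ω) :
    1 - (∑ x, Q x * (W x - μ) ^ 2) / (m * t ^ 2) ≤ ∑ ω ∈ univ.filter S, ∏ j, Q (ω j) := by
  have hcheb := one_sub_div_sq_le_sum_filter (fun ω => prod_nonneg fun j _ => hQ0 (ω j))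
    (sum_pi_prod_eq_one hQ) ht S hS
  rwa [sum_pi_prod_mul_sq_mean_sub hQ hm hμ, div_div] at hcheb

end FiniteProbability

section Weights

variable {V ι : Type} [Fintype ι] (cl : ι → Clause V)

theorem wt_pos (θ : ℝ) (X : V → Bool) : 0 < wt cl θ X := exp_pos _

theorem wt_zero (X : V → Bool) : wt cl 0 X = 1 := by simp [wt]

theorem wt_le_wt_of_le {θ θ' : ℝ} (h : θ ≤ θ') (X : V → Bool) : wt cl θ' X ≤ wt cl θ X :=
  exp_le_exp.2 (by nlinarith [(numUnsat cl X).cast_nonneg (α := ℝ)])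

theorem exp_neg_mul_card_le_wt {θ : ℝ} (hθ : 0 ≤ θ) (X : V → Bool) :
    exp (-(θ * Fintype.card ι)) ≤ wt cl θ X := by
  have hunsat : (numUnsat cl X : ℝ) ≤ Fintype.card ι := by
    exact_mod_cast card_filter_le _ _
  exact exp_le_exp.2 (by nlinarith)

theorem wt_mul_div_pow (a b : ℝ) (k : ℕ) (X : V → Bool) :
    wt cl a X * (wt cl b X / wt cl a X) ^ k = wt cl (a + k * (b - a)) X := by
  simp only [wt]
  rw [← exp_sub, ← exp_nat_mul, ← exp_add]
  ring_nf

end Weights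

section PartitionFunction

variable {V ι : Type} [Fintype V] [DecidableEq V] [Fintype ι] (cl : ι → Clause V)

theorem partZ_pos (θ : ℝ) : 0 < partZ cl θ :=
  sum_pos (fun X _ => wt_pos cl θ X) univ_nonempty

theorem partZ_zero : partZ cl 0 = 2 ^ Fintype.card V := by
  simp [partZ, wt_zero]

theorem partZ_le_partZ_of_le {θ θ' : ℝ} (h : θ ≤ θ') : partZ cl θ' ≤ partZ cl θ :=
  sum_le_sum fun X _ => wt_le_wt_of_le cl h X

theorem two_pow_mul_exp_neg_le_partZ {θ : ℝ} (hθ : 0 ≤ θ) :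
    2 ^ Fintype.card V * exp (-(θ * Fintype.card ι)) ≤ partZ cl θ :=
  calc 2 ^ Fintype.card V * exp (-(θ * Fintype.card ι))
      = ∑ _X : V → Bool, exp (-(θ * Fintype.card ι)) := by simp
    _ ≤ partZ cl θ := sum_le_sum fun X _ => exp_neg_mul_card_le_wt cl hθ X

/-- The Gibbs distribution `μ_θ`. -/
noncomputable def gibbs (θ : ℝ) (X : V → Bool) : ℝ := wt cl θ X / partZ cl θ

theorem gibbs_nonneg (θ : ℝ) (X : V → Bool) : 0 ≤ gibbs cl θ X :=
  div_nonneg (wt_pos cl θ X).le (partZ_pos cl θ).le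

theorem sum_gibbs (θ : ℝ) : ∑ X, gibbs cl θ X = 1 := by
  simp only [gibbs, ← sum_div]
  exact div_self (partZ_pos cl θ).ne'

/-- The joint law of the samples `X_1, …, X_ℓ` that determine one copy of `W`. -/
noncomputable def gibbsPi (θ : ℕ → ℝ) (ℓ : ℕ) (x : Fin ℓ → V → Bool) : ℝ :=
  ∏ i : Fin ℓ, gibbs cl (θ i) (x i)

theorem gibbsPi_nonneg (θ : ℕ → ℝ) (ℓ : ℕ) (x : Fin ℓ → V → Bool) : 0 ≤ gibbsPi cl θ ℓ x :=
  prod_nonneg fun _ _ => gibbs_nonneg cl _ _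

theorem sum_gibbsPi (θ : ℕ → ℝ) (ℓ : ℕ) : ∑ x, gibbsPi cl θ ℓ x = 1 := by
  simp_rw [gibbsPi, ← Fintype.prod_sum, sum_gibbs, prod_const_one]

theorem probOmega_eq_prod_gibbsPi (θ : ℕ → ℝ) (ℓ m : ℕ) (ω : Fin m → Fin ℓ → V → Bool) :
    probOmega cl θ ℓ m ω = ∏ j, gibbsPi cl θ ℓ (ω j) :=
  rfl

variable {θ : ℕ → ℝ} {h : ℝ} (hθ : ∀ i : ℕ, θ i = i * h)
include hθ

theorem sum_gibbsPi_mul_What_pow (ℓ k : ℕ) :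
    ∑ x, gibbsPi cl θ ℓ x * What cl θ ℓ x ^ k
      = (2 ^ Fintype.card V) ^ k * ∏ i ∈ range ℓ, partZ cl (θ (i + k)) / partZ cl (θ i) := by
  have hpoint : ∀ x : Fin ℓ → V → Bool, gibbsPi cl θ ℓ x * What cl θ ℓ x ^ k
      = (2 ^ Fintype.card V) ^ k * ∏ i : Fin ℓ, wt cl (θ (i + k)) (x i) / partZ cl (θ i) := by
    intro x
    rw [gibbsPi, What, mul_pow, ← prod_pow, mul_left_comm, ← prod_mul_distrib]
    congr 1
    refine prod_congr rfl fun i _ => ?_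
    rw [gibbs, div_mul_eq_mul_div, wt_mul_div_pow, hθ, hθ, hθ]
    push_cast
    ring_nf
  simp_rw [hpoint, ← mul_sum]
  rw [← Fintype.prod_sum fun (i : Fin ℓ) X => wt cl (θ (i + k)) X / partZ cl (θ i)]
  simp_rw [← sum_div]
  exact congrArg _ (Fin.prod_univ_eq_prod_range (fun i => partZ cl (θ (i + k)) / partZ cl (θ i)) ℓ)

theorem sum_gibbsPi_mul_What (ℓ : ℕ) :
    ∑ x, gibbsPi cl θ ℓ x * What cl θ ℓ x = partZ cl (θ ℓ) := by
  have hθ0 : θ 0 = 0 := by simp [hθ]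
  have hmoment := sum_gibbsPi_mul_What_pow cl hθ ℓ 1
  simp only [pow_one] at hmoment
  rw [hmoment, prod_range_div_of_ne_zero (fun i => partZ cl (θ i)) (fun i => (partZ_pos cl _).ne'),
    hθ0, partZ_zero cl, mul_div_cancel₀ _ (by positivity)]

theorem sum_gibbsPi_mul_What_sq_le (hh : 0 ≤ h) (hhC : h * Fintype.card ι ≤ 1) (ℓ : ℕ) :
    ∑ x, gibbsPi cl θ ℓ x * What cl θ ℓ x ^ 2 ≤ exp 1 * partZ cl (θ ℓ) ^ 2 := by
  have hθ0 : θ 0 = 0 := by simp [hθ]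
  have hZ : ∀ i, partZ cl (θ i) ≠ 0 := fun i => (partZ_pos cl _).ne'
  have hZ1 : 2 ^ Fintype.card V ≤ exp 1 * partZ cl (θ 1) := by
    have hlow := two_pow_mul_exp_neg_le_partZ cl (θ := θ 1) (by simp [hθ, hh])
    have hexp : exp (-1) ≤ exp (-(θ 1 * Fintype.card ι)) := exp_le_exp.2 (by simp [hθ, hhC])
    calc (2 : ℝ) ^ Fintype.card V = exp 1 * (2 ^ Fintype.card V * exp (-1)) := by
          rw [mul_left_comm, ← exp_add]; simp
      _ ≤ exp 1 * partZ cl (θ 1) := by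
          gcongr; exact (mul_le_mul_of_nonneg_left hexp (by positivity)).trans hlow
  have hmono : partZ cl (θ (ℓ + 1)) ≤ partZ cl (θ ℓ) :=
    partZ_le_partZ_of_le cl (by rw [hθ, hθ]; push_cast; nlinarith)
  have hZ1pos := partZ_pos cl (θ 1)
  rw [sum_gibbsPi_mul_What_pow cl hθ ℓ 2, prod_range_add_two_div _ hZ, hθ0, partZ_zero cl]
  calc ((2 : ℝ) ^ Fintype.card V) ^ 2
        * (partZ cl (θ (ℓ + 1)) / partZ cl (θ 1) * (partZ cl (θ ℓ) / 2 ^ Fintype.card V))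
      = 2 ^ Fintype.card V * partZ cl (θ (ℓ + 1)) * partZ cl (θ ℓ) / partZ cl (θ 1) := by
        field_simp
    _ ≤ exp 1 * partZ cl (θ 1) * partZ cl (θ ℓ) * partZ cl (θ ℓ) / partZ cl (θ 1) := by
        have := partZ_pos cl (θ ℓ)
        have := partZ_pos cl (θ (ℓ + 1))
        gcongr
    _ = exp 1 * partZ cl (θ ℓ) ^ 2 := by
        field_simp

theorem sum_gibbsPi_mul_What_sub_sq_le (hh : 0 ≤ h) (hhC : h * Fintype.card ι ≤ 1) (ℓ : ℕ) :
    ∑ x, gibbsPi cl θ ℓ x * (What cl θ ℓ x - partZ cl (θ ℓ)) ^ 2 ≤ 2 * partZ cl (θ ℓ) ^ 2 := by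
  rw [sum_mul_sub_sq (sum_gibbsPi cl θ ℓ) (sum_gibbsPi_mul_What cl hθ ℓ)]
  nlinarith [sum_gibbsPi_mul_What_sq_le cl hθ hh hhC ℓ, exp_one_lt_d9]

end PartitionFunction

open Classical in
theorem stmt_13_general {V ι : Type} [Fintype V] [DecidableEq V] [Fintype ι]
    (cl : ι → Clause V) (d : ℕ)
    (hC : Fintype.card ι ≤ Fintype.card V * d)
    (θ : ℕ → ℝ) (hθ : ∀ i : ℕ, θ i = (i : ℝ) / (d * Fintype.card V))
    (ℓ : ℕ) (ε : ℝ) (hε0 : 0 < ε) (hε1 : ε ≤ 1)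
    (m : ℕ) (hm : m = ⌈(144 : ℝ) / ε ^ 2⌉₊) :
    (7 : ℝ) / 8 ≤
      ∑ ω ∈ Finset.univ.filter (fun ω : Fin m → Fin ℓ → (V → Bool) =>
          Real.exp (-(ε / 2)) * partZ cl (θ ℓ)
              ≤ (1 / (m : ℝ)) * ∑ j : Fin m, What cl θ ℓ (ω j) ∧
            (1 / (m : ℝ)) * ∑ j : Fin m, What cl θ ℓ (ω j)
              ≤ Real.exp (ε / 2) * partZ cl (θ ℓ)),
        probOmega cl θ ℓ m ω := by
  have hθh : ∀ i : ℕ, θ i = i * (d * Fintype.card V : ℝ)⁻¹ := fun i => by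
    rw [hθ, div_eq_mul_inv]
  have hhC : (d * Fintype.card V : ℝ)⁻¹ * Fintype.card ι ≤ 1 :=
    inv_mul_le_one_of_le₀ (by rw [mul_comm]; exact_mod_cast hC) (by positivity)
  simp only [probOmega_eq_prod_gibbsPi]
  set Z := partZ cl (θ ℓ)
  have hZ : 0 < Z := partZ_pos cl _
  have hm0 : 0 < m := by rw [hm]; exact Nat.ceil_pos.2 (by positivity)
  have h144 : 144 ≤ m * ε ^ 2 := (div_le_iff₀ (by positivity)).1 (hm ▸ Nat.le_ceil _)
  calc (7 : ℝ) / 8 ≤ 1 - 2 * Z ^ 2 / (m * (ε / 3 * Z) ^ 2) := by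
        have hratio : 2 * Z ^ 2 / (m * (ε / 3 * Z) ^ 2) = 18 / (m * ε ^ 2) := by
          field_simp; ring
        have hsmall : 18 / (m * ε ^ 2) ≤ 1 / 8 := by
          rw [div_le_iff₀ (by positivity)]; linarith
        linarith
    _ ≤ 1 - (∑ x, gibbsPi cl θ ℓ x * (What cl θ ℓ x - Z) ^ 2) / (m * (ε / 3 * Z) ^ 2) := by
        gcongr
        exact sum_gibbsPi_mul_What_sub_sq_le cl hθh (by positivity) hhC ℓ
    _ ≤ _ :=
        one_sub_div_le_sum_filter_of_abs_mean_sub_lt (sum_gibbsPi cl θ ℓ) (gibbsPi_nonneg cl θ ℓ)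
          hm0 (sum_gibbsPi_mul_What cl hθh ℓ) (by positivity) _
          fun _ hclose => mem_Icc_exp_half_mul_of_abs_sub_lt hε0.le hε1 hZ.le hclose

open Classical in
/-- Let `0 < ε ≤ 1`, `m = ⌈144·ε⁻²⌉`, and let `Ŵ¹, …, Ŵ^m` be
independent random variables each distributed as `W = 2^n·Π_{i=1}^ℓ W_i`.  Then the
average `Ẑ = (1/m)·Σ_j Ŵ^j` satisfies
`Pr[exp(−ε/2)·Z(θ_ℓ) ≤ Ẑ ≤ exp(ε/2)·Z(θ_ℓ)] ≥ 7/8`. -/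
theorem stmt_13 {V ι : Type} [Fintype V] [DecidableEq V] [Fintype ι]
    (cl : ι → Clause V) (d : ℕ)
    (hdeg : ∀ v : V, (Finset.univ.filter fun i => v ∈ (cl i).vars).card ≤ d)
    (hC : Fintype.card ι ≤ Fintype.card V * d)
    (θ : ℕ → ℝ) (hθ : ∀ i : ℕ, θ i = (i : ℝ) / (d * Fintype.card V))
    (ℓ : ℕ) (ε : ℝ) (hε0 : 0 < ε) (hε1 : ε ≤ 1)
    (m : ℕ) (hm : m = ⌈(144 : ℝ) / ε ^ 2⌉₊) :
    (7 : ℝ) / 8 ≤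
      ∑ ω ∈ Finset.univ.filter (fun ω : Fin m → Fin ℓ → (V → Bool) =>
          Real.exp (-(ε / 2)) * partZ cl (θ ℓ)
              ≤ (1 / (m : ℝ)) * ∑ j : Fin m, What cl θ ℓ (ω j) ∧
            (1 / (m : ℝ)) * ∑ j : Fin m, What cl θ ℓ (ω j)
              ≤ Real.exp (ε / 2) * partZ cl (θ ℓ)),
        probOmega cl θ ℓ m ω :=
  stmt_13_general cl d hC θ hθ ℓ ε hε0 hε1 m hm
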